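/- arXiv:2208.02533 — 7 statements merged into one kernel-verified Lean document; each statement's English description precedes it below -/
import Mathlib

section
/- Let S be a nonempty finite set and let P be a complete updating rule with an Ordered Surprises representation given by μ_0,…,μ_K (with ∪_k supp(μ_k) = S). Then P satisfies the conditional probability system chain rule: for all events G ⊆ F ⊆ E with F nonempty, P(G|E) = P(G|F) · P(F|E). -/
open Finset

variable {S : Type*} [Fintype S] [DecidableEq S]

def IsProb (μ : S → ℝ) : Prop := (∀ s, 0 ≤ μ s) ∧ ∑ s, μ s = 1

def mass (μ : S → ℝ) (E : Finset S) : ℝ := ∑ s ∈ E, μ s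

noncomputable def BU (μ : S → ℝ) (E : Finset S) : S → ℝ :=
  fun s => if s ∈ E then μ s / mass μ E else 0

def OSRep (P : Finset S → S → ℝ) (K : ℕ) (μ : ℕ → S → ℝ) : Prop :=
  (∀ k ≤ K, IsProb (μ k)) ∧
  (∀ s : S, ∃ k ≤ K, 0 < μ k s) ∧
  (∀ E : Finset S, E.Nonempty → ∀ k ≤ K,
    0 < mass (μ k) E → (∀ j < k, mass (μ j) E = 0) → P E = BU (μ k) E)

def DisjointSupports (K : ℕ) (μ : ℕ → S → ℝ) : Prop :=
  ∀ k ≤ K, ∀ k' ≤ K, k ≠ k' → ∀ s : S, ¬ (0 < μ k s ∧ 0 < μ k' s)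

lemma mass_nonneg_of_nonneg (ν : S → ℝ) (h : ∀ s, 0 ≤ ν s) (A : Finset S) :
    0 ≤ mass ν A := Finset.sum_nonneg fun s _ => h s

lemma mass_mono (ν : S → ℝ) (h : ∀ s, 0 ≤ ν s) {A B : Finset S} (hAB : A ⊆ B) :
    mass ν A ≤ mass ν B :=
  Finset.sum_le_sum_of_subset_of_nonneg hAB fun s _ _ => h s

lemma mass_BU (ν : S → ℝ) {A E : Finset S} (hAE : A ⊆ E) :
    mass (BU ν E) A = mass ν A / mass ν E := by
  unfold mass BU
  rw [Finset.sum_congr rfl fun s hs => if_pos (hAE hs), Finset.sum_div]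
  rfl

theorem os_chain_rule [Nonempty S] (P : Finset S → S → ℝ) (K : ℕ) (μ : ℕ → S → ℝ)
    (hP : ∀ E : Finset S, E.Nonempty → IsProb (P E))
    (hOS : OSRep P K μ) :
    ∀ G F E : Finset S, G ⊆ F → F ⊆ E → F.Nonempty →
      mass (P E) G = mass (P F) G * mass (P E) F := by
  classical
  obtain ⟨hProb, hCover, hRep⟩ := hOS
  intro G F E hGF hFE hF
  have hE : E.Nonempty := hF.mono hFE
  have hnn : ∀ k ≤ K, ∀ s, 0 ≤ μ k s := fun k hk => (hProb k hk).1
  -- minimal k with positive mass on E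
  have hex : ∃ k, k ≤ K ∧ 0 < mass (μ k) E := by
    obtain ⟨s, hsF⟩ := hF
    obtain ⟨k, hk, hks⟩ := hCover s
    refine ⟨k, hk, lt_of_lt_of_le hks ?_⟩
    exact Finset.single_le_sum (fun t _ => hnn k hk t) (hFE hsF)
  set k := Nat.find hex with hkdef
  obtain ⟨hkK, hkE⟩ := Nat.find_spec hex
  have hmin : ∀ j < k, mass (μ j) E = 0 := by
    intro j hj
    have := Nat.find_min hex hj
    push_neg at this
    exact le_antisymm (this (le_trans hj.le hkK)) (mass_nonneg_of_nonneg _ (hnn j (le_trans hj.le hkK)) E)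
  have hPE : P E = BU (μ k) E := hRep E hE k hkK hkE hmin
  have hmEne : mass (μ k) E ≠ 0 := ne_of_gt hkE
  by_cases hkF : 0 < mass (μ k) F
  · -- same k works for F
    have hminF : ∀ j < k, mass (μ j) F = 0 := fun j hj =>
      le_antisymm ((mass_mono _ (hnn j (le_trans hj.le hkK)) hFE).trans (hmin j hj).le)
        (mass_nonneg_of_nonneg _ (hnn j (le_trans hj.le hkK)) F)
    have hPF : P F = BU (μ k) F := hRep F hF k hkK hkF hminF
    rw [hPE, hPF, mass_BU _ (hGF.trans hFE), mass_BU _ hGF, mass_BU _ hFE]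
    field_simp
  · -- mass (μ k) F = 0, both sides vanish
    have hF0 : mass (μ k) F = 0 :=
      le_antisymm (not_lt.mp hkF) (mass_nonneg_of_nonneg _ (hnn k hkK) F)
    have hG0 : mass (μ k) G = 0 :=
      le_antisymm ((mass_mono _ (hnn k hkK) hGF).trans hF0.le)
        (mass_nonneg_of_nonneg _ (hnn k hkK) G)
    rw [hPE, mass_BU _ (hGF.trans hFE), mass_BU _ hFE, hG0, hF0]
    simp
end

section
/- Let S be a nonempty finite set and let P be a conditional probability system, i.e., a complete updating rule that is concentrated (P(E|E) = 1 for all nonempty E) and satisfies P(G|E) = P(G|F)·P(F|E) for all G ⊆ F ⊆ E with F nonempty. Then P has an Ordered Surprises representation: there exist probability distributions μ_0,…,μ_K on S with pairwise disjoint supports covering S such that for every nonempty E, P(·|E) = BU(μ_{k*}, E) where k* is the least k with μ_k(E) > 0. -/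
open Finset

variable {S : Type*} [Fintype S] [DecidableEq S]

open Classical in
noncomputable def chainE (P : Finset S → S → ℝ) : ℕ → Finset S
  | 0 => Finset.univ
  | k + 1 => (chainE P k).filter (fun s => P (chainE P k) s ≤ 0)

lemma chainE_succ_subset (P : Finset S → S → ℝ) (k : ℕ) :
    chainE P (k + 1) ⊆ chainE P k := Finset.filter_subset _ _

lemma chainE_subset (P : Finset S → S → ℝ) {j k : ℕ} (h : j ≤ k) :
    chainE P k ⊆ chainE P j := by
  induction k with
  | zero => simp_all
  | succ n ih =>
    rcases Nat.lt_or_ge j (n + 1) with h' | h'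
    · exact (chainE_succ_subset P n).trans (ih (Nat.lt_succ_iff.mp h'))
    · have : j = n + 1 := le_antisymm h h'
      subst this; exact Finset.Subset.refl _

lemma conc_zero (P : Finset S → S → ℝ)
    (hP : ∀ E : Finset S, E.Nonempty → IsProb (P E))
    (hconc : ∀ E : Finset S, E.Nonempty → mass (P E) E = 1)
    {E : Finset S} (hE : E.Nonempty) {s : S} (hs : s ∉ E) : P E s = 0 := by
  have h1 : ∑ t, P E t = 1 := (hP E hE).2
  have h2 : ∑ t ∈ E, P E t = 1 := hconc E hE
  have hsplit : ∑ t ∈ E, P E t + ∑ t ∈ Eᶜ, P E t = ∑ t, P E t :=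
    Finset.sum_add_sum_compl E _
  have h0 : ∑ t ∈ Eᶜ, P E t = 0 := by linarith
  have := (Finset.sum_eq_zero_iff_of_nonneg (fun t _ => (hP E hE).1 t)).mp h0
  exact this s (Finset.mem_compl.mpr hs)

theorem cps_has_os_representation [Nonempty S] (P : Finset S → S → ℝ)
    (hP : ∀ E : Finset S, E.Nonempty → IsProb (P E))
    (hconc : ∀ E : Finset S, E.Nonempty → mass (P E) E = 1)
    (hchain : ∀ G F E : Finset S, G ⊆ F → F ⊆ E → F.Nonempty →
      mass (P E) G = mass (P F) G * mass (P E) F) :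
    ∃ (K : ℕ) (μ : ℕ → S → ℝ),
      (∀ k ≤ K, IsProb (μ k)) ∧
      DisjointSupports K μ ∧
      (∀ s : S, ∃ k ≤ K, 0 < μ k s) ∧
      (∀ E : Finset S, E.Nonempty → ∀ k ≤ K,
        0 < mass (μ k) E → (∀ j < k, mass (μ j) E = 0) → P E = BU (μ k) E) := by
  classical
  -- strict decrease while nonempty
  have hstep : ∀ k, (chainE P k).Nonempty → chainE P (k + 1) ⊂ chainE P k := by
    intro k hk
    refine Finset.ssubset_iff_of_subset (chainE_succ_subset P k) |>.mpr ?_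
    by_contra hall
    push_neg at hall
    have hle : ∀ s ∈ chainE P k, P (chainE P k) s ≤ 0 := by
      intro s hs
      have := hall s hs
      simp only [chainE, Finset.mem_filter] at this
      exact this.2
    have : mass (P (chainE P k)) (chainE P k) ≤ 0 := Finset.sum_nonpos hle
    have h1 := hconc _ hk
    linarith
  -- eventually empty
  have hcard : ∀ k, (chainE P k).card + k ≤ Fintype.card S ∨ chainE P k = ∅ := by
    intro k
    induction k with
    | zero => left; simp [chainE]
    | succ n ih =>
      rcases ih with ih | ih
      · rcases Finset.eq_empty_or_nonempty (chainE P n) with he | hne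
        · right
          exact Finset.subset_empty.mp (he ▸ chainE_succ_subset P n)
        · left
          have := Finset.card_lt_card (hstep n hne)
          omega
      · right
        exact Finset.subset_empty.mp (ih ▸ chainE_succ_subset P n)
  have hempty : chainE P (Fintype.card S + 1) = ∅ := by
    have h := hcard (Fintype.card S + 1)
    rcases h with h | h
    · exfalso; omega
    · exact h
  have hex : ∃ k, chainE P (k + 1) = ∅ := ⟨Fintype.card S, hempty⟩
  set K := Nat.find hex with hK
  have hKempty : chainE P (K + 1) = ∅ := Nat.find_spec hex
  -- nonemptiness up to K
  have hne : ∀ k ≤ K, (chainE P k).Nonempty := by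
    intro k hk
    rcases Finset.eq_empty_or_nonempty (chainE P k) with he | h
    · exfalso
      cases k with
      | zero =>
        have : (Finset.univ : Finset S).Nonempty := Finset.univ_nonempty
        rw [show chainE P 0 = (Finset.univ : Finset S) from rfl] at he
        simp [he] at this
      | succ j =>
        have : K ≤ j := Nat.find_le he
        omega
    · exact h
  refine ⟨K, fun k => P (chainE P k), ?_, ?_, ?_, ?_⟩
  · intro k hk
    exact hP _ (hne k hk)
  · -- disjoint supports
    have key : ∀ k k', k < k' → k' ≤ K → ∀ s : S,
        ¬ (0 < P (chainE P k) s ∧ 0 < P (chainE P k') s) := by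
      rintro k k' hlt hk' s ⟨h1, h2⟩
      have hs' : s ∈ chainE P k' := by
        by_contra hs
        have := conc_zero P hP hconc (hne k' hk') hs
        linarith
      have hsub : chainE P k' ⊆ chainE P (k + 1) := chainE_subset P hlt
      have : s ∈ chainE P (k + 1) := hsub hs'
      simp only [chainE, Finset.mem_filter] at this
      linarith [this.2]
    intro k hk k' hk' hne' s
    rcases Nat.lt_or_ge k k' with h | h
    · exact key k k' h hk' s
    · have hlt : k' < k := lt_of_le_of_ne h (Ne.symm hne')
      intro ⟨h1, h2⟩
      exact key k' k hlt hk s ⟨h2, h1⟩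
  · -- coverage
    intro s
    have hex2 : ∃ k, s ∉ chainE P (k + 1) := ⟨K, by simp [hKempty]⟩
    set k0 := Nat.find hex2 with hk0
    have hspec : s ∉ chainE P (k0 + 1) := Nat.find_spec hex2
    have hk0K : k0 ≤ K := Nat.find_le (by simp [hKempty])
    have hmem : s ∈ chainE P k0 := by
      cases h : k0 with
      | zero => rw [show chainE P 0 = (Finset.univ : Finset S) from rfl]; exact Finset.mem_univ s
      | succ j =>
        have := Nat.find_min hex2 (by omega : j < k0)
        push_neg at this
        rw [h] at *
        exact this
    refine ⟨k0, hk0K, ?_⟩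
    by_contra hnp
    push_neg at hnp
    have : s ∈ chainE P (k0 + 1) := by
      simp only [chainE, Finset.mem_filter]
      exact ⟨hmem, hnp⟩
    exact hspec this
  · -- representation
    intro E hE k hk hpos hzero
    -- E ⊆ chainE P k
    have hsub : ∀ j ≤ k, E ⊆ chainE P j := by
      intro j hj
      induction j with
      | zero => intro s _; exact Finset.mem_univ s
      | succ n ih =>
        intro s hs
        have hsn : s ∈ chainE P n := ih (by omega) hs
        have hz : mass (P (chainE P n)) E = 0 := hzero n (by omega)
        have hnn : ∀ t ∈ E, 0 ≤ P (chainE P n) t :=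
          fun t _ => (hP _ (hne n (by omega))).1 t
        have h0 : P (chainE P n) s = 0 :=
          (Finset.sum_eq_zero_iff_of_nonneg hnn).mp hz s hs
        simp only [chainE, Finset.mem_filter]
        exact ⟨hsn, le_of_eq h0⟩
    have hEsub : E ⊆ chainE P k := hsub k le_rfl
    funext s
    by_cases hs : s ∈ E
    · have hc := hchain {s} E (chainE P k) (Finset.singleton_subset_iff.mpr hs) hEsub hE
      rw [show mass (P (chainE P k)) {s} = P (chainE P k) s from Finset.sum_singleton _ _,
        show mass (P E) {s} = P E s from Finset.sum_singleton _ _] at hc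
      simp only [BU, if_pos hs]
      rw [eq_div_iff (ne_of_gt hpos)]
      linarith [hc]
    · simp only [BU, if_neg hs]
      exact conc_zero P hP hconc hE hs
end

section
/- Let μ be a probability distribution on a finite set S. Define a relation on Bayesian updates of μ by: BU(μ,E) ≻ BU(μ,E') whenever BU(μ,E) ≠ BU(μ,E') and BU(μ,E')(E) = 1 (for events E, E' with μ(E), μ(E') > 0). Then ≻ is acyclic: there is no finite cycle E^1,…,E^T with BU(μ,E^t)(E^{t+1}) = 1 for all t < T, BU(μ,E^T)(E^1) = 1, and BU(μ,E^1) ≠ BU(μ,E^2). -/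
open Finset

variable {S : Type*} [Fintype S] [DecidableEq S]

lemma bu_incl (μ : S → ℝ) (hnn : ∀ s, 0 ≤ μ s) (Ee F : Finset S)
    (hE : 0 < mass μ Ee) (h1 : mass (BU μ Ee) F = 1) :
    ∀ s ∈ Ee, 0 < μ s → s ∈ F := by
  have hsum : ∑ s ∈ F ∩ Ee, μ s = mass μ Ee := by
    have : mass (BU μ Ee) F = (∑ s ∈ F ∩ Ee, μ s) / mass μ Ee := by
      unfold mass BU
      rw [← Finset.sum_filter, Finset.filter_mem_eq_inter, Finset.sum_div]
      rfl
    rw [this, div_eq_one_iff_eq hE.ne'] at h1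
    exact h1
  have hzero : ∑ s ∈ Ee \ F, μ s = 0 := by
    have : ∑ s ∈ F ∩ Ee, μ s + ∑ s ∈ Ee \ F, μ s = mass μ Ee := by
      unfold mass
      rw [Finset.inter_comm, Finset.sum_inter_add_sum_sdiff]
    linarith
  intro s hs hpos
  by_contra hsF
  have hle : μ s ≤ ∑ x ∈ Ee \ F, μ x :=
    Finset.single_le_sum (fun x _ => hnn x) (Finset.mem_sdiff.mpr ⟨hs, hsF⟩)
  linarith

theorem bu_dominance_acyclic (μ : S → ℝ) (hμ : IsProb μ)
    (T : ℕ) (hT : 2 ≤ T) (E : ℕ → Finset S)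
    (hpos : ∀ t < T, 0 < mass μ (E t))
    (hstep : ∀ t, t + 1 < T → mass (BU μ (E t)) (E (t + 1)) = 1)
    (hlast : mass (BU μ (E (T - 1))) (E 0) = 1)
    (hne : BU μ (E 0) ≠ BU μ (E 1)) : False := by
  obtain ⟨hnn, -⟩ := hμ
  -- positive parts
  set P : ℕ → Finset S := fun t => (E t).filter (fun s => 0 < μ s) with hP
  have hmassP : ∀ t, mass μ (P t) = mass μ (E t) := by
    intro t
    unfold mass
    apply Finset.sum_subset (Finset.filter_subset _ _)
    intro s hs hns
    have := hnn s
    have : ¬ 0 < μ s := fun h => hns (Finset.mem_filter.mpr ⟨hs, h⟩)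
    linarith
  have hsub : ∀ t, t + 1 < T → P t ⊆ P (t + 1) := by
    intro t ht s hs
    rw [hP, Finset.mem_filter] at hs ⊢
    exact ⟨bu_incl μ hnn (E t) (E (t+1)) (hpos t (by omega)) (hstep t ht) s hs.1 hs.2, hs.2⟩
  have hsublast : P (T - 1) ⊆ P 0 := by
    intro s hs
    rw [hP, Finset.mem_filter] at hs ⊢
    exact ⟨bu_incl μ hnn (E (T-1)) (E 0) (hpos (T-1) (by omega)) hlast s hs.1 hs.2, hs.2⟩
  have hmono : ∀ t, t + 1 < T → mass μ (P t) ≤ mass μ (P (t + 1)) := by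
    intro t ht
    exact Finset.sum_le_sum_of_subset_of_nonneg (hsub t ht) (fun s _ _ => hnn s)
  have hchain : ∀ t, t < T → mass μ (P 1) ≤ mass μ (P t) ∨ t = 0 := by
    intro t
    induction t with
    | zero => intro _; right; rfl
    | succ n ih =>
      intro hn
      left
      rcases ih (by omega) with h | h
      · exact le_trans h (hmono n hn)
      · subst h
        exact le_of_eq rfl
  have hm1 : mass μ (P 1) ≤ mass μ (P (T - 1)) := by
    rcases hchain (T - 1) (by omega) with h | h
    · exact h
    · omega
  have hlastle : mass μ (P (T - 1)) ≤ mass μ (P 0) :=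
    Finset.sum_le_sum_of_subset_of_nonneg hsublast (fun s _ _ => hnn s)
  have h01 : mass μ (P 0) ≤ mass μ (P 1) := hmono 0 (by omega)
  have heqm : mass μ (P 0) = mass μ (P 1) := le_antisymm h01 (le_trans hm1 hlastle)
  -- P 0 = P 1
  have hPeq : P 0 = P 1 := by
    apply Finset.eq_of_subset_of_card_le (hsub 0 (by omega))
    by_contra hcard
    push_neg at hcard
    have hss : P 0 ⊂ P 1 := (hsub 0 (by omega)).ssubset_of_ne
      (fun h => by rw [h] at hcard; omega)
    obtain ⟨s, hs1, hs0⟩ := Finset.exists_of_ssubset hss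
    have hspos : 0 < μ s := (Finset.mem_filter.mp hs1).2
    have : mass μ (P 0) + μ s ≤ mass μ (P 1) := by
      have : mass μ (insert s (P 0)) ≤ mass μ (P 1) :=
        Finset.sum_le_sum_of_subset_of_nonneg
          (Finset.insert_subset hs1 hss.1) (fun x _ _ => hnn x)
      rwa [mass, Finset.sum_insert hs0, add_comm] at this
    linarith
  -- conclude BU equal
  apply hne
  have hmE : mass μ (E 0) = mass μ (E 1) := by
    rw [← hmassP 0, ← hmassP 1, heqm]
  funext s
  unfold BU
  by_cases hsp : 0 < μ s
  · have hmem : s ∈ E 0 ↔ s ∈ E 1 := by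
      constructor
      · intro h
        have : s ∈ P 0 := Finset.mem_filter.mpr ⟨h, hsp⟩
        rw [hPeq] at this
        exact (Finset.mem_filter.mp this).1
      · intro h
        have : s ∈ P 1 := Finset.mem_filter.mpr ⟨h, hsp⟩
        rw [← hPeq] at this
        exact (Finset.mem_filter.mp this).1
    by_cases h0 : s ∈ E 0
    · rw [if_pos h0, if_pos (hmem.mp h0), hmE]
    · rw [if_neg h0, if_neg (fun h => h0 (hmem.mpr h))]
  · have hz : μ s = 0 := le_antisymm (not_lt.mp hsp) (hnn s)
    by_cases h0 : s ∈ E 0 <;> by_cases h1 : s ∈ E 1 <;> simp [h0, h1, hz]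
end

section
/- Let P be a complete updating rule on a nonempty finite set S with an Ordered Surprises representation μ_0,…,μ_K with pairwise disjoint supports covering S. Then P has a Hypothesis Testing representation with threshold ε = 0: there exists a strictly positive second-order weight function ρ on {μ_0,…,μ_K} with ρ(μ_0) > ρ(μ_k) for all k > 0, such that for every nonempty E ⊆ S, if μ_0(E) > 0 then P(·|E) = BU(μ_0,E), and if μ_0(E) = 0 then P(·|E) = BU(μ_{k*},E) where k* is the unique index maximizing μ_k(E)·ρ(μ_k), with μ_{k*}(E)·ρ(μ_{k*}) > μ_j(E)·ρ(μ_j) for all j ≠ k*. -/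
open Finset

variable {S : Type*} [Fintype S] [DecidableEq S]

lemma mass_nonneg' (μ : S → ℝ) (h : ∀ s, 0 ≤ μ s) (E : Finset S) : 0 ≤ mass μ E :=
  Finset.sum_nonneg (fun s _ => h s)

lemma mass_le_one' (μ : S → ℝ) (h : IsProb μ) (E : Finset S) : mass μ E ≤ 1 := by
  rw [← h.2]
  exact Finset.sum_le_sum_of_subset_of_nonneg (Finset.subset_univ E) (fun s _ _ => h.1 s)

theorem os_has_ht_representation [Nonempty S] (P : Finset S → S → ℝ) (K : ℕ) (μ : ℕ → S → ℝ)
    (hP : ∀ E : Finset S, E.Nonempty → IsProb (P E))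
    (hOS : OSRep P K μ)
    (hdisj : DisjointSupports K μ) :
    ∃ ρ : ℕ → ℝ,
      (∀ k ≤ K, 0 < ρ k) ∧
      (∑ k ∈ Finset.range (K + 1), ρ k = 1) ∧
      (∀ k, 0 < k → k ≤ K → ρ k < ρ 0) ∧
      (∀ E : Finset S, E.Nonempty →
        (0 < mass (μ 0) E → P E = BU (μ 0) E) ∧
        (mass (μ 0) E = 0 → ∃ k ≤ K, P E = BU (μ k) E ∧
          ∀ j ≤ K, j ≠ k → mass (μ j) E * ρ j < mass (μ k) E * ρ k)) := by
  classical
  set M : Finset ℝ := ((Finset.range (K+1)) ×ˢ (Finset.univ : Finset (Finset S))).image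
      (fun p => mass (μ p.1) p.2) with hM
  set Mp := M.filter (fun x => 0 < x) with hMp
  have h1mem : (1:ℝ) ∈ Mp := by
    refine mem_filter.2 ⟨?_, one_pos⟩
    refine mem_image.2 ⟨(0, Finset.univ), ?_, ?_⟩
    · simp
    · exact (hOS.1 0 (Nat.zero_le K)).2
  have hMpne : Mp.Nonempty := ⟨1, h1mem⟩
  set δ := Mp.min' hMpne with hδ
  have hδpos : 0 < δ := (mem_filter.1 (Mp.min'_mem hMpne)).2
  have hδle1 : δ ≤ 1 := Finset.min'_le _ _ h1mem
  have hδ_le : ∀ k ≤ K, ∀ E : Finset S, 0 < mass (μ k) E → δ ≤ mass (μ k) E := by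
    intro k hk E hE
    apply Finset.min'_le
    refine mem_filter.2 ⟨mem_image.2 ⟨(k, E), ?_, rfl⟩, hE⟩
    simp [Finset.mem_range, Nat.lt_succ_iff, hk]
  set r := δ / 2 with hrdef
  have hr0 : 0 < r := by positivity
  have hrδ : r < δ := by rw [hrdef]; linarith
  have hr1 : r < 1 := by rw [hrdef]; linarith
  set C := ∑ k ∈ Finset.range (K+1), r ^ k with hC
  have hCpos : 0 < C := Finset.sum_pos (fun k _ => pow_pos hr0 k) ⟨0, by simp⟩
  refine ⟨fun k => r ^ k / C, ?_, ?_, ?_, ?_⟩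
  · intro k _; exact div_pos (pow_pos hr0 k) hCpos
  · rw [← Finset.sum_div, ← hC]; field_simp
  · intro k hk _
    have h1 : r ^ k < 1 := pow_lt_one₀ hr0.le hr1 hk.ne'
    simpa using (div_lt_div_iff_of_pos_right hCpos).mpr h1
  · intro E hE
    constructor
    · intro h0
      exact hOS.2.2 E hE 0 (Nat.zero_le K) h0 (fun j hj => absurd hj (Nat.not_lt_zero j))
    · intro h0
      have hex : ∃ k, k ≤ K ∧ 0 < mass (μ k) E := by
        obtain ⟨s, hs⟩ := hE
        obtain ⟨k, hk, hk0⟩ := hOS.2.1 s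
        refine ⟨k, hk, lt_of_lt_of_le hk0 ?_⟩
        exact Finset.single_le_sum (fun t _ => (hOS.1 k hk).1 t) hs
      set k := Nat.find hex with hkdef
      obtain ⟨hkK, hkpos⟩ := Nat.find_spec hex
      have hzero : ∀ j < k, mass (μ j) E = 0 := by
        intro j hj
        have hnot := Nat.find_min hex hj
        push_neg at hnot
        exact le_antisymm (hnot (hj.le.trans hkK)) (mass_nonneg' _ (hOS.1 j (hj.le.trans hkK)).1 E)
      refine ⟨k, hkK, hOS.2.2 E hE k hkK hkpos hzero, ?_⟩
      intro j hjK hjk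
      rcases lt_or_gt_of_ne hjk with hlt | hgt
      · rw [hzero j hlt, zero_mul]
        exact mul_pos hkpos (div_pos (pow_pos hr0 k) hCpos)
      · have hmj : mass (μ j) E ≤ 1 := mass_le_one' _ (hOS.1 j hjK) E
        have hmjnn : 0 ≤ mass (μ j) E := mass_nonneg' _ (hOS.1 j hjK).1 E
        have hδk : δ ≤ mass (μ k) E := hδ_le k hkK E hkpos
        have hrkC : 0 < r ^ k / C := div_pos (pow_pos hr0 k) hCpos
        calc mass (μ j) E * (r ^ j / C) ≤ 1 * (r ^ j / C) :=
              mul_le_mul_of_nonneg_right hmj (div_pos (pow_pos hr0 j) hCpos).le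
          _ = r ^ j / C := one_mul _
          _ ≤ r ^ (k+1) / C := by
              exact (div_le_div_iff_of_pos_right hCpos).mpr (pow_le_pow_of_le_one hr0.le hr1.le hgt)
          _ = r * (r ^ k / C) := by rw [pow_succ]; ring
          _ < δ * (r ^ k / C) := mul_lt_mul_of_pos_right hrδ hrkC
          _ ≤ mass (μ k) E * (r ^ k / C) := mul_le_mul_of_nonneg_right hδk hrkC.le
end

section
/- Let μ_0,…,μ_K be probability distributions on a finite set S with pairwise disjoint supports, and for each k let δ_k = min{μ_k(s) : s ∈ supp(μ_k)} ∈ (0,1]. Define v(0) = 1 and v(k) = (δ_{k-1}/2)·v(k-1) for k ≥ 1, and set ρ(k) = v(k)/Σ_j v(j). Then for any nonempty event E and any indices k̲ < k with μ_{k̲}(E) > 0 and supp(μ_k) ∩ E ≠ ∅, we have μ_{k̲}(E)·ρ(k̲) > μ_k(E)·ρ(k). -/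
open Finset

variable {S : Type*} [Fintype S] [DecidableEq S]

theorem ht_weight_inequality (K : ℕ) (μ : ℕ → S → ℝ)
    (hprob : ∀ k ≤ K, IsProb (μ k))
    (hdisj : DisjointSupports K μ)
    (δ v ρ : ℕ → ℝ)
    (hδle : ∀ k, ∀ s : S, 0 < μ k s → δ k ≤ μ k s)
    (hδmem : ∀ k ≤ K, ∃ s : S, 0 < μ k s ∧ δ k = μ k s)
    (hv0 : v 0 = 1) (hv : ∀ k, v (k + 1) = δ k / 2 * v k)
    (hρ : ∀ k, ρ k = v k / ∑ j ∈ Finset.range (K + 1), v j)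
    (E : Finset S) (hE : E.Nonempty)
    (kb k : ℕ) (hlt : kb < k) (hk : k ≤ K)
    (hkb : 0 < mass (μ kb) E)
    (hsup : ∃ s ∈ E, 0 < μ k s) :
    mass (μ k) E * ρ k < mass (μ kb) E * ρ kb := by
  have hkbK : kb ≤ K := le_of_lt (lt_of_lt_of_le hlt hk)
  have hδpos : ∀ j ≤ K, 0 < δ j := by
    intro j hj
    obtain ⟨s, hs, hδ⟩ := hδmem j hj
    rw [hδ]; exact hs
  have hδ1 : ∀ j ≤ K, δ j ≤ 1 := by
    intro j hj
    obtain ⟨s, hs, hδ⟩ := hδmem j hj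
    obtain ⟨hnj, hsj⟩ := hprob j hj
    rw [hδ, ← hsj]
    exact Finset.single_le_sum (fun t _ => hnj t) (Finset.mem_univ s)
  have hvpos : ∀ j, j ≤ K → 0 < v j := by
    intro j
    induction j with
    | zero => intro _; rw [hv0]; norm_num
    | succ n ih =>
      intro hn
      rw [hv n]
      have hnK : n ≤ K := le_trans (Nat.le_succ n) hn
      exact mul_pos (by linarith [hδpos n hnK]) (ih hnK)
  have hvmono : ∀ j, j ≤ K → ∀ i ≤ j, v j ≤ v i := by
    intro j
    induction j with
    | zero => intro _ i hi; interval_cases i; exact le_refl _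
    | succ n ih =>
      intro hn i hi
      have hnK : n ≤ K := le_trans (Nat.le_succ n) hn
      have hstep : v (n + 1) ≤ v n := by
        rw [hv n]
        nlinarith [hvpos n hnK, hδ1 n hnK, hδpos n hnK]
      rcases Nat.lt_or_ge i (n + 1) with h | h
      · exact le_trans hstep (ih hnK i (Nat.lt_succ_iff.mp h))
      · have : i = n + 1 := le_antisymm hi h
        rw [this]
  -- mass (μ k) E ≤ 1
  obtain ⟨hnk, hsk⟩ := hprob k hk
  have hmass1 : mass (μ k) E ≤ 1 := by
    rw [← hsk]
    exact Finset.sum_le_sum_of_subset_of_nonneg (Finset.subset_univ E)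
      (fun t _ _ => hnk t)
  have hmassnn : 0 ≤ mass (μ k) E :=
    Finset.sum_nonneg (fun t _ => hnk t)
  -- δ kb ≤ mass (μ kb) E
  obtain ⟨hnkb, _⟩ := hprob kb hkbK
  have hex : ∃ s ∈ E, (0:ℝ) < μ kb s := by
    by_contra hcon
    push_neg at hcon
    have : mass (μ kb) E ≤ 0 := Finset.sum_nonpos (fun t ht => hcon t ht)
    linarith
  obtain ⟨s, hsE, hspos⟩ := hex
  have hδmass : δ kb ≤ mass (μ kb) E := by
    have h1 : δ kb ≤ μ kb s := hδle kb s hspos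
    have h2 : μ kb s ≤ mass (μ kb) E :=
      Finset.single_le_sum (fun t _ => hnkb t) hsE
    linarith
  have hvkb : 0 < v kb := hvpos kb hkbK
  have hvk : 0 ≤ v k := le_of_lt (hvpos k hk)
  have key : mass (μ k) E * v k < mass (μ kb) E * v kb := by
    have h1 : mass (μ k) E * v k ≤ v k := by nlinarith
    have h2 : v k ≤ v (kb + 1) := hvmono k hk (kb + 1) hlt
    have h3 : v (kb + 1) = δ kb / 2 * v kb := hv kb
    nlinarith
  have hZ : 0 < ∑ j ∈ Finset.range (K + 1), v j :=
    Finset.sum_pos (fun j hj => hvpos j (Nat.lt_succ_iff.mp (Finset.mem_range.mp hj)))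
      ⟨0, Finset.mem_range.mpr (Nat.succ_pos K)⟩
  rw [hρ k, hρ kb, ← mul_div_assoc, ← mul_div_assoc]
  exact (div_lt_div_iff_of_pos_right hZ).mpr key
end

section
/- Let P be a conditional probability system on a nonempty finite set S. Define S_0 = S and inductively S_{k+1} = {s ∈ S_k : P({s}|S_k) = 0} as long as S_{k+1} is nonempty. Then this is a strictly decreasing sequence of sets, hence there exists K ≤ |S| such that every s ∈ S_K satisfies P({s}|S_K) > 0, and the supports of the distributions μ_k := P(·|S_k), k = 0,…,K, are pairwise disjoint and their union is S. -/
open Finset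

variable {S : Type*} [Fintype S] [DecidableEq S]

lemma supp_subset (P : Finset S → S → ℝ)
    (hP : ∀ E : Finset S, E.Nonempty → IsProb (P E))
    (hconc : ∀ E : Finset S, E.Nonempty → mass (P E) E = 1)
    (E : Finset S) (hE : E.Nonempty) {s : S} (hs : s ∉ E) : P E s = 0 := by
  have h1 : ∑ t ∈ E, P E t + ∑ t ∈ Eᶜ, P E t = 1 := by
    rw [Finset.sum_add_sum_compl]; exact (hP E hE).2
  have h2 : ∑ t ∈ Eᶜ, P E t = 0 := by
    have := hconc E hE; unfold mass at this; linarith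
  have := (Finset.sum_eq_zero_iff_of_nonneg (fun t _ => (hP E hE).1 t)).1 h2
  exact this s (Finset.mem_compl.2 hs)

theorem cps_surprise_ladder [Nonempty S] (P : Finset S → S → ℝ)
    (hP : ∀ E : Finset S, E.Nonempty → IsProb (P E))
    (hconc : ∀ E : Finset S, E.Nonempty → mass (P E) E = 1)
    (hchain : ∀ G F E : Finset S, G ⊆ F → F ⊆ E → F.Nonempty →
      mass (P E) G = mass (P F) G * mass (P E) F)
    (Sseq : ℕ → Finset S) (h0 : Sseq 0 = Finset.univ)
    (hsucc : ∀ k, Sseq (k + 1) = (Sseq k).filter (fun s => P (Sseq k) s = 0)) :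
    (∀ k, (Sseq k).Nonempty → Sseq (k + 1) ⊂ Sseq k) ∧
    ∃ K ≤ Fintype.card S,
      (Sseq K).Nonempty ∧
      (∀ s ∈ Sseq K, 0 < P (Sseq K) s) ∧
      (∀ k ≤ K, ∀ k' ≤ K, k ≠ k' → ∀ s : S,
        ¬ (0 < P (Sseq k) s ∧ 0 < P (Sseq k') s)) ∧
      (∀ s : S, ∃ k ≤ K, 0 < P (Sseq k) s) := by
  -- basic monotonicity
  have hsub : ∀ k, Sseq (k + 1) ⊆ Sseq k := fun k => by
    rw [hsucc k]; exact Finset.filter_subset _ _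
  have hmono : ∀ {k k'}, k ≤ k' → Sseq k' ⊆ Sseq k := by
    intro k k' h
    induction h with
    | refl => exact subset_rfl
    | step h ih => exact (hsub _).trans ih
  -- strict decrease
  have hstrict : ∀ k, (Sseq k).Nonempty → Sseq (k + 1) ⊂ Sseq k := by
    intro k hk
    refine Finset.ssubset_iff_of_subset (hsub k) |>.2 ?_
    by_contra h
    push_neg at h
    have hall : ∀ s ∈ Sseq k, P (Sseq k) s = 0 := by
      intro s hs
      have := h s hs
      rw [hsucc k, Finset.mem_filter] at this
      exact this.2
    have : mass (P (Sseq k)) (Sseq k) = 0 := Finset.sum_eq_zero hall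
    rw [hconc (Sseq k) hk] at this
    norm_num at this
  refine ⟨hstrict, ?_⟩
  -- cardinality bound: if Sseq k nonempty then card + k ≤ card S
  have hcard : ∀ k, (Sseq k).Nonempty → (Sseq k).card + k ≤ Fintype.card S := by
    intro k
    induction k with
    | zero => intro _; simp [h0, Finset.card_univ]
    | succ n ih =>
      intro hk
      have hn : (Sseq n).Nonempty := hk.mono (hsub n)
      have h1 := ih hn
      have h2 : (Sseq (n + 1)).card < (Sseq n).card :=
        Finset.card_lt_card (hstrict n hn)
      omega
  -- Sseq eventually empty
  have hempty : ∃ N, ¬ (Sseq N).Nonempty := by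
    refine ⟨Fintype.card S, fun h => ?_⟩
    have := hcard _ h
    have := Finset.card_pos.2 h
    omega
  classical
  let N := Nat.find hempty
  have hNspec : ¬ (Sseq N).Nonempty := Nat.find_spec hempty
  have hNpos : 0 < N := by
    rcases Nat.eq_zero_or_pos N with h | h
    · exfalso; apply hNspec; rw [show N = 0 from h, h0]
      exact Finset.univ_nonempty
    · exact h
  set K := N - 1 with hK
  have hKN : K + 1 = N := by omega
  have hKne : (Sseq K).Nonempty := by
    by_contra h
    have := Nat.find_min' hempty h
    omega
  have hKcard : K ≤ Fintype.card S := by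
    have := hcard K hKne
    omega
  have hK1 : ¬ (Sseq (K + 1)).Nonempty := by rw [hKN]; exact hNspec
  -- positivity at K
  have hpos : ∀ s ∈ Sseq K, 0 < P (Sseq K) s := by
    intro s hs
    rcases lt_or_eq_of_le ((hP (Sseq K) hKne).1 s) with h | h
    · exact h
    · exfalso; apply hK1
      exact ⟨s, by rw [hsucc K, Finset.mem_filter]; exact ⟨hs, h.symm⟩⟩
  have hne : ∀ k ≤ K, (Sseq k).Nonempty := fun k hk => hKne.mono (hmono hk)
  refine ⟨K, hKcard, hKne, hpos, ?_, ?_⟩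
  · -- disjoint supports
    have key : ∀ k k', k < k' → k' ≤ K → ∀ s : S,
        ¬ (0 < P (Sseq k) s ∧ 0 < P (Sseq k') s) := by
      intro k k' hlt hk' s ⟨h1, h2⟩
      have hsk' : s ∈ Sseq k' := by
        by_contra hs
        rw [supp_subset P hP hconc _ (hne k' hk') hs] at h2
        exact lt_irrefl 0 h2
      have : s ∈ Sseq (k + 1) := hmono hlt hsk'
      rw [hsucc k, Finset.mem_filter] at this
      rw [this.2] at h1
      exact lt_irrefl 0 h1
    intro k hk k' hk' hne' s
    rcases lt_or_gt_of_ne hne' with h | h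
    · exact key k k' h hk' s
    · intro ⟨h1, h2⟩; exact key k' k h hk s ⟨h2, h1⟩
  · -- covering
    intro s
    by_contra h
    push_neg at h
    have hzero : ∀ k ≤ K, P (Sseq k) s = 0 := by
      intro k hk
      exact le_antisymm (h k hk) ((hP (Sseq k) (hne k hk)).1 s)
    have hmem : ∀ k ≤ K + 1, s ∈ Sseq k := by
      intro k
      induction k with
      | zero => intro _; rw [h0]; exact Finset.mem_univ s
      | succ n ih =>
        intro hk
        have hn : n ≤ K := by omega
        have := ih (by omega)
        rw [hsucc n, Finset.mem_filter]
        exact ⟨this, hzero n hn⟩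
    exact hK1 ⟨s, hmem (K + 1) le_rfl⟩
end

section
/- Let P be a complete updating rule on a nonempty finite set S admitting an Ordered Surprises representation with distributions having pairwise disjoint supports covering S. Then this representation is unique: if μ_0,…,μ_K and ν_0,…,ν_L are two Ordered Surprises representations of P, each with pairwise disjoint supports covering S, then K = L and μ_k = ν_k for all k. -/
open Finset

variable {S : Type*} [Fintype S] [DecidableEq S]

open scoped Classical in
noncomputable def Tset (μ : ℕ → S → ℝ) (k : ℕ) : Finset S :=
  univ.filter (fun s => ∀ j < k, μ j s = 0)

open scoped Classical in
lemma mem_Tset {μ : ℕ → S → ℝ} {k : ℕ} {s : S} :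
    s ∈ Tset μ k ↔ ∀ j < k, μ j s = 0 := by
  simp [Tset]

lemma isProb_exists_pos {μ : S → ℝ} (h : IsProb μ) : ∃ s, 0 < μ s := by
  by_contra hc
  push_neg at hc
  have h0 : ∑ s, μ s = 0 := Finset.sum_eq_zero fun s _ => le_antisymm (hc s) (h.1 s)
  rw [h.2] at h0
  norm_num at h0

lemma key {P : Finset S → S → ℝ} {K : ℕ} {μ : ℕ → S → ℝ}
    (hμ : OSRep P K μ) (hd : DisjointSupports K μ) {k : ℕ} (hk : k ≤ K) :
    P (Tset μ k) = μ k := by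
  have hout : ∀ s, s ∉ Tset μ k → μ k s = 0 := by
    intro s hs
    rw [mem_Tset] at hs
    push_neg at hs
    obtain ⟨j, hj, hjs⟩ := hs
    have hjpos : 0 < μ j s :=
      lt_of_le_of_ne ((hμ.1 j (hj.le.trans hk)).1 s) (Ne.symm hjs)
    have hdisj := hd j (hj.le.trans hk) k hk (Nat.ne_of_lt hj) s
    have hle := (hμ.1 k hk).1 s
    by_contra h
    exact hdisj ⟨hjpos, lt_of_le_of_ne hle (Ne.symm h)⟩
  have hmass : mass (μ k) (Tset μ k) = 1 := by
    unfold mass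
    rw [Finset.sum_subset (Finset.subset_univ _) (fun s _ hs => hout s hs)]
    exact (hμ.1 k hk).2
  have hTne : (Tset μ k).Nonempty := by
    obtain ⟨s, hs⟩ := isProb_exists_pos (hμ.1 k hk)
    refine ⟨s, mem_Tset.mpr fun j hj => ?_⟩
    have hdisj := hd j (hj.le.trans hk) k hk (Nat.ne_of_lt hj) s
    have hle := (hμ.1 j (hj.le.trans hk)).1 s
    by_contra h
    exact hdisj ⟨lt_of_le_of_ne hle (Ne.symm h), hs⟩
  have hzero : ∀ j < k, mass (μ j) (Tset μ k) = 0 := by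
    intro j hj
    exact Finset.sum_eq_zero fun s hs => (mem_Tset.mp hs) j hj
  have hPeq := hμ.2.2 (Tset μ k) hTne k hk (by rw [hmass]; norm_num) hzero
  funext s
  rw [hPeq]
  unfold BU
  by_cases hs : s ∈ Tset μ k
  · simp [hs, hmass]
  · simp [hs, hout s hs]

theorem os_representation_unique [Nonempty S] (P : Finset S → S → ℝ)
    (hP : ∀ E : Finset S, E.Nonempty → IsProb (P E))
    (K L : ℕ) (μ ν : ℕ → S → ℝ)
    (hμ : OSRep P K μ) (hμdisj : DisjointSupports K μ)
    (hν : OSRep P L ν) (hνdisj : DisjointSupports L ν) :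
    K = L ∧ ∀ k ≤ K, μ k = ν k := by
  have heq : ∀ k, k ≤ K → k ≤ L → μ k = ν k := by
    intro k
    induction k using Nat.strong_induction_on with
    | _ k ih =>
      intro hkK hkL
      have hprev : ∀ j < k, μ j = ν j := fun j hj =>
        ih j hj (hj.le.trans hkK) (hj.le.trans hkL)
      have hT : Tset μ k = Tset ν k := by
        ext s
        rw [mem_Tset, mem_Tset]
        constructor
        · intro h j hj; rw [← hprev j hj]; exact h j hj
        · intro h j hj; rw [hprev j hj]; exact h j hj
      calc μ k = P (Tset μ k) := (key hμ hμdisj hkK).symm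
        _ = P (Tset ν k) := by rw [hT]
        _ = ν k := key hν hνdisj hkL
  have hKL : K = L := by
    rcases lt_trichotomy K L with h | h | h
    · exfalso
      obtain ⟨s, hs⟩ := isProb_exists_pos (hν.1 (K + 1) h)
      have hzero : ∀ j ≤ K, μ j s = 0 := by
        intro j hj
        have hjL : j ≤ L := hj.trans h.le
        rw [heq j hj hjL]
        have hdisj := hνdisj j hjL (K + 1) h (by omega) s
        have hle := (hν.1 j hjL).1 s
        by_contra hc
        exact hdisj ⟨lt_of_le_of_ne hle (Ne.symm hc), hs⟩
      obtain ⟨j, hj, hjs⟩ := hμ.2.1 s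
      rw [hzero j hj] at hjs
      exact lt_irrefl 0 hjs
    · exact h
    · exfalso
      obtain ⟨s, hs⟩ := isProb_exists_pos (hμ.1 (L + 1) h)
      have hzero : ∀ j ≤ L, ν j s = 0 := by
        intro j hj
        have hjK : j ≤ K := hj.trans h.le
        rw [← heq j hjK hj]
        have hdisj := hμdisj j hjK (L + 1) h (by omega) s
        have hle := (hμ.1 j hjK).1 s
        by_contra hc
        exact hdisj ⟨lt_of_le_of_ne hle (Ne.symm hc), hs⟩
      obtain ⟨j, hj, hjs⟩ := hν.2.1 s
      rw [hzero j hj] at hjs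
      exact lt_irrefl 0 hjs
  exact ⟨hKL, fun k hk => heq k hk (hKL ▸ hk)⟩
end
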